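/- arXiv:1007.4584 — 3 statements merged into one kernel-verified Lean document; each statement's English description precedes it below -/
import Mathlib

section
/- For integers n > 2 and n-1 ≤ k ≤ 2n-3 with n and k both even, the evaluation of c(n,k;q) = (1/[n-1]_q) * qbinom(3n-3, n+k) * qbinom(k-1, n-2) at q = -1 equals binom((3n-4)/2, (n+k)/2) * binom((k-2)/2, (n-2)/2). -/
/-- The Gaussian binomial coefficient as a polynomial in `q` over `ℤ`, via the
`q`-Pascal recursion `[n+1, k+1]_q = [n, k]_q + q^(k+1)·[n, k+1]_q`. -/
noncomputable def gauss : ℕ → ℕ → Polynomial ℤ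
  | _, 0 => 1
  | 0, _ + 1 => 0
  | n + 1, k + 1 => gauss n k + Polynomial.X ^ (k + 1) * gauss n (k + 1)

lemma gauss_eval (m k : ℕ) : (gauss m k).eval (-1 : ℤ) =
    if Even m ∧ ¬ Even k then 0 else ((m / 2).choose (k / 2) : ℤ) := by
  induction m generalizing k with
  | zero =>
    cases k with
    | zero => simp [gauss]
    | succ k =>
      simp only [gauss, Polynomial.eval_zero]
      rcases Nat.even_or_odd (k+1) with h | h
      · have h' := Nat.even_iff.mp h
        rw [if_neg (show ¬(Even 0 ∧ ¬ Even (k+1)) by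
              simp only [Nat.even_iff]; omega),
          Nat.choose_eq_zero_of_lt (by omega : 0/2 < (k+1)/2)]
        simp
      · have h' := Nat.odd_iff.mp h
        rw [if_pos (⟨Even.zero, by simp only [Nat.even_iff]; omega⟩ : Even 0 ∧ ¬ Even (k+1))]
  | succ m ih =>
    cases k with
    | zero => simp [gauss]
    | succ k =>
      simp only [gauss, Polynomial.eval_add, Polynomial.eval_mul, Polynomial.eval_pow,
        Polynomial.eval_X, ih]
      have key : ∀ x : ℕ, x % 2 = 0 ∧ Even x ∨ x % 2 = 1 ∧ ¬ Even x := by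
        intro x
        rcases Nat.even_or_odd x with h | h
        · exact Or.inl ⟨Nat.even_iff.mp h, h⟩
        · exact Or.inr ⟨Nat.odd_iff.mp h, Nat.not_even_iff_odd.mpr h⟩
      rcases key m with ⟨hm, _⟩ | ⟨hm, _⟩ <;> rcases key k with ⟨hk, _⟩ | ⟨hk, _⟩
      · rw [if_neg (show ¬(Even m ∧ ¬ Even k) by simp only [Nat.even_iff]; omega),
          if_pos (show Even m ∧ ¬ Even (k+1) by simp only [Nat.even_iff]; omega),
          if_neg (show ¬(Even (m+1) ∧ ¬ Even (k+1)) by simp only [Nat.even_iff]; omega),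
          (by omega : (m+1)/2 = m/2), (by omega : (k+1)/2 = k/2)]
        ring
      · rw [if_pos (show Even m ∧ ¬ Even k by simp only [Nat.even_iff]; omega),
          if_neg (show ¬(Even m ∧ ¬ Even (k+1)) by simp only [Nat.even_iff]; omega),
          if_neg (show ¬(Even (m+1) ∧ ¬ Even (k+1)) by simp only [Nat.even_iff]; omega),
          Even.neg_one_pow (n := k+1) ⟨(k+1)/2, by omega⟩,
          (by omega : (m+1)/2 = m/2)]
        ring
      · rw [if_neg (show ¬(Even m ∧ ¬ Even k) by simp only [Nat.even_iff]; omega),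
          if_neg (show ¬(Even m ∧ ¬ Even (k+1)) by simp only [Nat.even_iff]; omega),
          if_pos (show Even (m+1) ∧ ¬ Even (k+1) by simp only [Nat.even_iff]; omega),
          Odd.neg_one_pow (n := k+1) ⟨k/2, by omega⟩,
          (by omega : (k+1)/2 = k/2)]
        ring
      · rw [if_neg (show ¬(Even m ∧ ¬ Even k) by simp only [Nat.even_iff]; omega),
          if_neg (show ¬(Even m ∧ ¬ Even (k+1)) by simp only [Nat.even_iff]; omega),
          if_neg (show ¬(Even (m+1) ∧ ¬ Even (k+1)) by simp only [Nat.even_iff]; omega),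
          Even.neg_one_pow (n := k+1) ⟨(k+1)/2, by omega⟩,
          (by omega : (m+1)/2 = m/2 + 1), (by omega : (k+1)/2 = k/2 + 1),
          Nat.choose_succ_succ]
        push_cast
        ring

/-- For `n > 2` and `k` both even with `n-1 ≤ k ≤ 2n-3`, the evaluation of
`c(n,k;q) = (1/[n-1]_q)·[3n-3, n+k]_q·[k-1, n-2]_q` at `q = -1` equals
`C((3n-4)/2, (n+k)/2)·C((k-2)/2, (n-2)/2)`. -/
theorem stmt1 (n k : ℕ) (hn : 2 < n) (hnk : (n : ℤ) - 1 ≤ (k : ℤ))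
    (hk : (k : ℤ) ≤ 2 * (n : ℤ) - 3) (hne : Even n) (hke : Even k) :
    Polynomial.aeval (-1 : ℂ) (gauss (3 * n - 3) (n + k)) *
        Polynomial.aeval (-1 : ℂ) (gauss (k - 1) (n - 2)) /
        (∑ i ∈ Finset.range (n - 1), (-1 : ℂ) ^ i) =
      (Nat.choose ((3 * n - 4) / 2) ((n + k) / 2) *
        Nat.choose ((k - 2) / 2) ((n - 2) / 2) : ℕ) := by
  have hne' := Nat.even_iff.mp hne
  have hke' := Nat.even_iff.mp hke
  have hn4 : 4 ≤ n := by omega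
  have hk4 : 4 ≤ k := by omega
  have haev : ∀ a b : ℕ, Polynomial.aeval (-1 : ℂ) (gauss a b) =
      (((gauss a b).eval (-1 : ℤ) : ℤ) : ℂ) := by
    intro a b
    have h := Polynomial.eval₂_at_intCast (R := ℤ) (p := gauss a b) (Int.castRingHom ℂ) (-1)
    simpa [Polynomial.aeval_def] using h
  have hden : (∑ i ∈ Finset.range (n - 1), (-1 : ℂ) ^ i) = 1 := by
    rw [neg_one_geom_sum, if_neg]
    rw [Nat.even_iff]
    omega
  rw [hden, div_one, haev, haev, gauss_eval, gauss_eval,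
    if_neg (show ¬(Even (3*n-3) ∧ ¬ Even (n+k)) by simp only [Nat.even_iff]; omega),
    if_neg (show ¬(Even (k-1) ∧ ¬ Even (n-2)) by simp only [Nat.even_iff]; omega),
    (by omega : (3*n-3)/2 = (3*n-4)/2), (by omega : (k-1)/2 = (k-2)/2)]
  push_cast
  ring
end

section
/- Let d ≥ 3 divide n, let n-1 ≤ k ≤ 2n-3, and suppose d does not divide k. Then the evaluation of c(n,k;q) = (1/[n-1]_q) * qbinom(3n-3, n+k) * qbinom(k-1, n-2) at any primitive d-th root of unity ω equals 0. -/
/-!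
Let `ω` be a primitive `d`-th root of unity. It is a simple root of `q^j - 1` when `d ∣ j` and
not a root otherwise, so its multiplicity in the `q`-factorial `[m]_q! = ∏_{i<m} (q^(i+1) - 1)`
is `⌊m/d⌋`. From `[m, r]_q · [r]_q! · [m-r]_q! = [m]_q!`, its multiplicity in `[m, r]_q` is
`⌊m/d⌋ - ⌊r/d⌋ - ⌊(m-r)/d⌋`, which is positive exactly when the base-`d` subtraction `m - r`
borrows in the last digit, i.e. when `m % d < r % d`.

Write `s = k % d`, so `0 < s < d`. As `d ∣ n`, `(3n-3) % d = d-3` and `(n+k) % d = s`, so the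
first factor vanishes when `s ≥ d-2`; otherwise `(k-1) % d = s-1 < d-2 = (n-2) % d` and the second
factor vanishes.
-/

open Polynomial Finset

theorem gauss_eq_zero_of_lt {m r : ℕ} (h : m < r) : gauss m r = 0 := by
  induction m generalizing r with
  | zero => obtain ⟨r, rfl⟩ := Nat.exists_eq_add_one_of_ne_zero h.ne'; rfl
  | succ m ih =>
    obtain ⟨r, rfl⟩ := Nat.exists_eq_add_one_of_ne_zero (Nat.ne_zero_of_lt h)
    rw [gauss, ih (by omega), ih (by omega), mul_zero, add_zero]

theorem gauss_self (m : ℕ) : gauss m m = 1 := by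
  induction m with
  | zero => rfl
  | succ m ih => rw [gauss, ih, gauss_eq_zero_of_lt m.lt_succ_self, mul_zero, add_zero]

noncomputable def qFactorial (R : Type*) [CommRing R] (m : ℕ) : R[X] :=
  ∏ i ∈ range m, (X ^ (i + 1) - 1)

theorem qFactorial_succ (R : Type*) [CommRing R] (m : ℕ) :
    qFactorial R (m + 1) = qFactorial R m * (X ^ (m + 1) - 1) :=
  prod_range_succ _ _

theorem map_qFactorial {R S : Type*} [CommRing R] [CommRing S] (f : R →+* S) (m : ℕ) :
    (qFactorial R m).map f = qFactorial S m := by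
  simp [qFactorial, Polynomial.map_prod]

theorem qFactorial_monic (R : Type*) [CommRing R] (m : ℕ) : (qFactorial R m).Monic :=
  monic_prod_of_monic _ _ fun i _ => by simpa using monic_X_pow_sub_C (1 : R) i.succ_ne_zero

theorem gauss_mul_qFactorial_mul_qFactorial (s r : ℕ) :
    gauss (s + r) r * qFactorial ℤ r * qFactorial ℤ s = qFactorial ℤ (s + r) := by
  induction r generalizing s with
  | zero => simp [gauss, qFactorial]
  | succ r ihr =>
    induction s with
    | zero => simp [gauss_self, qFactorial]
    | succ s ihs =>
      have h := ihr (s + 1)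
      rw [show s + 1 + r = s + (r + 1) by omega, qFactorial_succ ℤ s] at h
      rw [qFactorial_succ ℤ r] at ihs
      rw [show s + 1 + (r + 1) = s + (r + 1) + 1 by omega, gauss, qFactorial_succ ℤ r,
        qFactorial_succ ℤ s, qFactorial_succ ℤ (s + (r + 1))]
      linear_combination (X ^ (r + 1) - 1 : ℤ[X]) * h + X ^ (r + 1) * (X ^ (s + 1) - 1) * ihs

theorem Polynomial.rootMultiplicity_prod {R ι : Type*} [CommRing R] [IsDomain R] {s : Finset ι}
    {f : ι → R[X]} (h : ∏ i ∈ s, f i ≠ 0) (a : R) :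
    rootMultiplicity a (∏ i ∈ s, f i) = ∑ i ∈ s, rootMultiplicity a (f i) := by
  classical
  simp only [← count_roots, roots_prod f s h, Multiset.count_bind]
  rfl

section RootOfUnity

variable {K : Type*} [Field K] [CharZero K] {ω : K} {d : ℕ}

theorem IsPrimitiveRoot.rootMultiplicity_X_pow_sub_one (hω : IsPrimitiveRoot ω d) {j : ℕ}
    (hj : j ≠ 0) : rootMultiplicity ω (X ^ j - 1 : K[X]) = if d ∣ j then 1 else 0 := by
  have hne : (X ^ j - 1 : K[X]) ≠ 0 := by simpa using (monic_X_pow_sub_C (1 : K) hj).ne_zero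
  split_ifs with h
  · have hroot : IsRoot (X ^ j - 1 : K[X]) ω := by simp [sub_eq_zero, hω.pow_eq_one_iff_dvd, h]
    have hsep : (X ^ j - 1 : K[X]).Separable :=
      X_pow_sub_one_separable_iff.2 (by exact_mod_cast hj)
    have := rootMultiplicity_le_one_of_separable hsep ω
    have := (rootMultiplicity_pos hne).2 hroot
    omega
  · exact rootMultiplicity_eq_zero (by simpa [sub_eq_zero, hω.pow_eq_one_iff_dvd] using h)

theorem IsPrimitiveRoot.rootMultiplicity_qFactorial (hω : IsPrimitiveRoot ω d) (m : ℕ) :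
    rootMultiplicity ω (qFactorial K m) = m / d := by
  rw [qFactorial, rootMultiplicity_prod (qFactorial_monic K m).ne_zero,
    ← Nat.card_multiples, card_filter]
  exact sum_congr rfl fun i _ => hω.rootMultiplicity_X_pow_sub_one i.succ_ne_zero

theorem IsPrimitiveRoot.rootMultiplicity_map_gauss (hω : IsPrimitiveRoot ω d) (s r : ℕ) :
    rootMultiplicity ω ((gauss (s + r) r).map (algebraMap ℤ K)) =
      (s + r) / d - r / d - s / d := by
  have h := congrArg (Polynomial.map (algebraMap ℤ K)) (gauss_mul_qFactorial_mul_qFactorial s r)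
  simp only [Polynomial.map_mul, map_qFactorial] at h
  have hne : (gauss (s + r) r).map (algebraMap ℤ K) * qFactorial K r * qFactorial K s ≠ 0 :=
    h ▸ (qFactorial_monic K (s + r)).ne_zero
  have hmul := congrArg (rootMultiplicity ω) h
  rw [rootMultiplicity_mul hne, rootMultiplicity_mul (left_ne_zero_of_mul hne)] at hmul
  simp only [hω.rootMultiplicity_qFactorial] at hmul
  omega

theorem IsPrimitiveRoot.aeval_gauss_eq_zero_of_mod_lt (hω : IsPrimitiveRoot ω d) {m r : ℕ}
    (hrm : r ≤ m) (h : m % d < r % d) : aeval ω (gauss m r) = 0 := by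
  obtain ⟨s, rfl⟩ := Nat.exists_eq_add_of_le' hrm
  have hd : 0 < d := Nat.pos_of_ne_zero fun hd => by simp [hd] at h
  have hcarry : d ≤ s % d + r % d := by
    by_contra! hlt
    rw [Nat.add_mod, Nat.mod_eq_of_lt hlt] at h
    omega
  have hpos : 0 < rootMultiplicity ω ((gauss (s + r) r).map (algebraMap ℤ K)) := by
    rw [hω.rootMultiplicity_map_gauss, Nat.add_div hd, if_pos hcarry]
    omega
  rw [aeval_def, ← eval_map]
  exact (rootMultiplicity_pos'.1 hpos).2

end RootOfUnity

theorem Nat.sub_mod_eq_sub_of_dvd {a c d : ℕ} (hda : d ∣ a) (hc : 0 < c) (hcd : c ≤ d)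
    (hca : c ≤ a) : (a - c) % d = d - c := by
  obtain ⟨u, rfl⟩ := hda
  obtain ⟨u, rfl⟩ : ∃ u', u = u' + 1 := ⟨u - 1, by cases u <;> simp_all⟩
  rw [show d * (u + 1) - c = (d - c) + d * u by ring_nf; omega,
    Nat.add_mul_mod_self_left, Nat.mod_eq_of_lt (by omega)]

/-- For `d ≥ 3` dividing `n` but not `k`, with `n-1 ≤ k ≤ 2n-3`, the evaluation of
`c(n,k;q) = (1/[n-1]_q)·[3n-3, n+k]_q·[k-1, n-2]_q` at any primitive `d`-th root of
unity `ω` equals `0`. -/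
theorem stmt3 (n k d : ℕ) (hd : 3 ≤ d) (hdn : d ∣ n) (hdk : ¬ d ∣ k)
    (hnk : (n : ℤ) - 1 ≤ (k : ℤ)) (hk : (k : ℤ) ≤ 2 * (n : ℤ) - 3)
    (ω : ℂ) (hω : IsPrimitiveRoot ω d) :
    Polynomial.aeval ω (gauss (3 * n - 3) (n + k)) *
        Polynomial.aeval ω (gauss (k - 1) (n - 2)) /
        (∑ i ∈ Finset.range (n - 1), ω ^ i) = 0 := by
  have hk0 : 0 < k % d := Nat.pos_of_ne_zero (mt Nat.dvd_of_mod_eq_zero hdk)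
  rcases lt_or_ge (d - 3) (k % d) with hlarge | hsmall
  · have h3n : (3 * n - 3) % d = d - 3 :=
      Nat.sub_mod_eq_sub_of_dvd (hdn.mul_left 3) (by norm_num) hd (by omega)
    have hnk_mod : (n + k) % d = k % d := by simp [Nat.add_mod, Nat.mod_eq_zero_of_dvd hdn]
    rw [hω.aeval_gauss_eq_zero_of_mod_lt (m := 3 * n - 3) (r := n + k) (by omega) (by omega),
      zero_mul, zero_div]
  · have hk1 : (k - 1) % d = k % d - 1 := (Nat.mod_sub_of_le hk0).symm
    have hn2 : (n - 2) % d = d - 2 :=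
      Nat.sub_mod_eq_sub_of_dvd hdn (by norm_num) (by omega) (by omega)
    rw [hω.aeval_gauss_eq_zero_of_mod_lt (m := k - 1) (r := n - 2) (by omega) (by omega),
      mul_zero, zero_div]
end

section
/- For all n ≥ 2 and n-1 ≤ k ≤ 2n-3, the product qbinom(3n-3, n+k) * qbinom(k-1, n-2) is divisible by [n-1]_q in the polynomial ring ℚ[q]. -/
open Polynomial

lemma gauss_succ_succ (a b : ℕ) :
    gauss (a+1) (b+1) = gauss a b + X ^ (b+1) * gauss a (b+1) := rfl

lemma gauss_zero_right (a : ℕ) : gauss a 0 = 1 := by cases a <;> rfl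

lemma gauss_eq_zero : ∀ {a b : ℕ}, a < b → gauss a b = 0 := by
  intro a
  induction a with
  | zero =>
    intro b h
    obtain ⟨c, rfl⟩ : ∃ c, b = c + 1 := ⟨b - 1, by omega⟩
    rfl
  | succ a ih =>
    intro b h
    obtain ⟨c, rfl⟩ : ∃ c, b = c + 1 := ⟨b - 1, by omega⟩
    rw [gauss_succ_succ, ih (by omega), ih (by omega)]
    ring

lemma gauss_pascal2 (a : ℕ) :
    ∀ b, gauss (a+1) (b+1) = X ^ (a - b) * gauss a b + gauss a (b+1) := by
  induction a with
  | zero =>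
    intro b
    cases b with
    | zero => simp [gauss_succ_succ, gauss_zero_right, gauss_eq_zero (by omega : (0:ℕ) < 1)]
    | succ c =>
      rw [gauss_eq_zero (by omega : 1 < c + 1 + 1), gauss_eq_zero (by omega : 0 < c + 1),
        gauss_eq_zero (by omega : 0 < c + 1 + 1)]
      ring
  | succ a ih =>
    intro b
    cases b with
    | zero =>
      have d2 := gauss_succ_succ (a+1) 0
      have d1 := gauss_succ_succ a 0
      have h1 := ih 0
      simp only [Nat.sub_zero, gauss_zero_right] at *
      linear_combination d2 + X * h1 - d1
    | succ c =>
      by_cases hca : c < a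
      · have d := gauss_succ_succ (a+1) (c+1)
        have h1 := ih c
        have h2 := ih (c+1)
        have d1 := gauss_succ_succ a c
        have d2 := gauss_succ_succ a (c+1)
        have hx : (X : Polynomial ℤ) ^ (c+1+1) * X ^ (a-(c+1)) = X ^ (a-c) * X ^ (c+1) := by
          rw [← pow_add, ← pow_add]; congr 1; omega
        rw [show a + 1 - (c + 1) = a - c by omega]
        linear_combination d + h1 + X ^ (c+1+1) * h2 - X ^ (a-c) * d1 - d2 + gauss a (c+1) * hx
      · by_cases h2 : c = a
        · subst h2
          have e0 := gauss_succ_succ (c+1) (c+1)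
          have e1 : gauss (c+1) (c+1+1) = 0 := gauss_eq_zero (by omega)
          rw [show c + 1 - (c + 1) = 0 by omega, e0, e1]
          ring
        · rw [gauss_eq_zero (by omega : a + 1 + 1 < c + 1 + 1),
            gauss_eq_zero (by omega : a + 1 < c + 1),
            gauss_eq_zero (by omega : a + 1 < c + 1 + 1)]
          ring

lemma gauss_L2 (a b : ℕ) :
    (X ^ (b+1) - 1) * gauss (a+1) (b+1) = (X ^ (a+1) - 1) * gauss a b := by
  by_cases h : b ≤ a
  · have p1 := gauss_succ_succ a b
    have p2 := gauss_pascal2 a b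
    have hx : (X : Polynomial ℤ) ^ (b+1) * X ^ (a-b) = X ^ (a+1) := by
      rw [← pow_add]; congr 1; omega
    linear_combination (X : Polynomial ℤ) ^ (b+1) * p2 - p1 + gauss a b * hx
  · rw [gauss_eq_zero (by omega : a < b), gauss_eq_zero (by omega : a + 1 < b + 1)]
    ring

lemma gauss_L4 (a b : ℕ) :
    (X ^ (a-b) - 1) * gauss a b = (X ^ (b+1) - 1) * gauss a (b+1) := by
  have p1 := gauss_succ_succ a b
  have p2 := gauss_pascal2 a b
  linear_combination p1 - p2

lemma cyclo_dvd {d m : ℕ} (hd : d ∣ m) (hm : 0 < m) :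
    cyclotomic d ℚ ∣ X ^ m - 1 := by
  rw [← prod_cyclotomic_eq_X_pow_sub_one hm ℚ]
  exact Finset.dvd_prod_of_mem _ (Nat.mem_divisors.2 ⟨hd, hm.ne'⟩)

lemma cyclo_not_dvd {d m : ℕ} (hd2 : 2 ≤ d) (hm : 0 < m) (h : ¬ d ∣ m) :
    ¬ cyclotomic d ℚ ∣ X ^ m - 1 := by
  intro hdvd
  rw [← prod_cyclotomic_eq_X_pow_sub_one hm ℚ] at hdvd
  have hco : IsCoprime (cyclotomic d ℚ) (∏ i ∈ m.divisors, cyclotomic i ℚ) :=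
    IsCoprime.prod_right fun i hi =>
      Polynomial.cyclotomic.isCoprime_rat (fun he => h (he ▸ (Nat.mem_divisors.1 hi).1))
  have hu : IsUnit (cyclotomic d ℚ) := hco.isUnit_of_dvd' dvd_rfl hdvd
  have hdeg := Polynomial.natDegree_eq_zero_of_isUnit hu
  rw [Polynomial.natDegree_cyclotomic] at hdeg
  have := Nat.totient_pos.2 (by omega : 0 < d)
  omega

/-- For `n ≥ 2` and `n-1 ≤ k ≤ 2n-3`, the `q`-integer `[n-1]_q` divides the product
`[3n-3, n+k]_q·[k-1, n-2]_q` of Gaussian binomials in `ℚ[q]`. -/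
theorem stmt6 (n k : ℕ) (hn : 2 ≤ n) (hnk : (n : ℤ) - 1 ≤ (k : ℤ))
    (hk : (k : ℤ) ≤ 2 * (n : ℤ) - 3) :
    (∑ i ∈ Finset.range (n - 1), (Polynomial.X : Polynomial ℚ) ^ i) ∣
      (gauss (3 * n - 3) (n + k)).map (Int.castRingHom ℚ) *
        (gauss (k - 1) (n - 2)).map (Int.castRingHom ℚ) := by
  have hk1 : n - 1 ≤ k := by omega
  have hk2 : k ≤ 2 * n - 3 := by omega
  rw [← Polynomial.prod_cyclotomic_eq_geom_sum (by omega : 0 < n - 1) ℚ]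
  apply Finset.prod_dvd_of_coprime
  · intro i _ j _ hij
    exact Polynomial.cyclotomic.isCoprime_rat hij
  · intro d hd
    have hd1 : d ≠ 1 := (Finset.mem_erase.1 hd).1
    have hddvd : d ∣ n - 1 := (Nat.mem_divisors.1 (Finset.mem_erase.1 hd).2).1
    have hdpos : 0 < d := Nat.pos_of_dvd_of_pos hddvd (by omega)
    have hd2 : 2 ≤ d := by omega
    have hprime : Prime (cyclotomic d ℚ) :=
      (Polynomial.cyclotomic.irreducible_rat (by omega)).prime
    by_cases hB : d ∣ k + 1
    · -- the cyclotomic divides the second factor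
      have hkn : n ≤ k := by
        by_contra hlt
        have hkeq : k + 1 = n := by omega
        have hone : d ∣ 1 := by
          have := Nat.dvd_sub (hkeq ▸ hB) hddvd
          rwa [show n - (n-1) = 1 by omega] at this
        exact hd1 (Nat.dvd_one.mp hone)
      have hm : ¬ d ∣ (k - 1) - (n - 2) := by
        intro hdm
        have h1 : d ∣ (n - 1) + ((k-1)-(n-2)) := Nat.dvd_add hddvd hdm
        have h2 : d ∣ (k+1) - ((n-1) + ((k-1)-(n-2))) := Nat.dvd_sub hB h1
        rw [show (k+1) - ((n-1) + ((k-1)-(n-2))) = 1 by omega] at h2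
        exact hd1 (Nat.dvd_one.mp h2)
      have key := congrArg (Polynomial.map (Int.castRingHom ℚ)) (gauss_L4 (k-1) (n-2))
      simp only [Polynomial.map_mul, Polynomial.map_sub, Polynomial.map_pow, Polynomial.map_X,
        Polynomial.map_one] at key
      rw [show (n-2)+1 = n-1 by omega] at key
      have hdvdR : cyclotomic d ℚ ∣
          (X ^ (n-1) - 1) * (gauss (k-1) (n-1)).map (Int.castRingHom ℚ) :=
        Dvd.dvd.mul_right (cyclo_dvd hddvd (by omega)) _
      rw [← key] at hdvdR
      rcases hprime.dvd_mul.mp hdvdR with h | h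
      · exact absurd h (cyclo_not_dvd hd2 (by omega) hm)
      · exact Dvd.dvd.mul_left h _
    · -- the cyclotomic divides the first factor
      have hnk' : ¬ d ∣ n + k := by
        intro hdm
        have h2 := Nat.dvd_sub hdm hddvd
        rw [show (n+k) - (n-1) = k+1 by omega] at h2
        exact hB h2
      have key := congrArg (Polynomial.map (Int.castRingHom ℚ)) (gauss_L2 (3*n-4) (n+k-1))
      simp only [Polynomial.map_mul, Polynomial.map_sub, Polynomial.map_pow, Polynomial.map_X,
        Polynomial.map_one] at key
      rw [show (n+k-1)+1 = n+k by omega, show (3*n-4)+1 = 3*n-3 by omega] at key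
      have hd3 : d ∣ 3*n-3 := by
        have := Dvd.dvd.mul_left hddvd 3
        rwa [show 3*(n-1) = 3*n-3 by omega] at this
      have hdvdR : cyclotomic d ℚ ∣
          (X ^ (3*n-3) - 1) * (gauss (3*n-4) (n+k-1)).map (Int.castRingHom ℚ) :=
        Dvd.dvd.mul_right (cyclo_dvd hd3 (by omega)) _
      rw [← key] at hdvdR
      rcases hprime.dvd_mul.mp hdvdR with h | h
      · exact absurd h (cyclo_not_dvd hd2 (by omega) hnk')
      · exact Dvd.dvd.mul_right h _
end
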